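/- arXiv:1904.00436 — 4 statements merged into one kernel-verified Lean document; each statement's English description precedes it below -/
import Mathlib

section
/- Let I ⊆ ℝ be an interval, t₀ ∈ I, and let φ : I → ℝ be twice differentiable with φ''(t) = −sin(2·φ(t)) for all t ∈ I. Suppose |φ(t₀)| < π/2 and that the energy e := (1/2)·φ'(t₀)² − (1/2)·cos(2·φ(t₀)) satisfies e < 1/2. Then for every t ∈ I: |φ(t)| ≤ (1/2)·arccos(−2e) < π/2. In particular, solutions starting close enough to the Sun-pointing attitude (φ, φ') = (0, 0) remain close to it for all time. -/
/-- Libration/stability of the Sun-pointing attitude: for solutions of the pendulum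
`φ'' = −sin(2φ)` starting inside the separatrix (`|φ(t₀)| < π/2`, energy `e < 1/2`),
the attitude stays confined: `|φ(t)| ≤ (1/2)·arccos(−2e) < π/2` for all `t ∈ I`. -/
theorem stmt_5 (I : Set ℝ) (hI : I.OrdConnected) (t₀ : ℝ) (ht₀ : t₀ ∈ I)
    (φ φ' : ℝ → ℝ)
    (hd1 : ∀ t ∈ I, HasDerivAt φ (φ' t) t)
    (hd2 : ∀ t ∈ I, HasDerivAt φ' (-Real.sin (2 * φ t)) t)
    (hφ0 : |φ t₀| < Real.pi / 2)
    (e : ℝ) (he : e = (1/2) * φ' t₀ ^ 2 - (1/2) * Real.cos (2 * φ t₀))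
    (he2 : e < 1/2) :
    (∀ t ∈ I, |φ t| ≤ (1/2) * Real.arccos (-(2*e))) ∧
    (1/2) * Real.arccos (-(2*e)) < Real.pi / 2 := by
  have hconv : Convex ℝ I := hI.convex
  set E : ℝ → ℝ := fun t => (1/2) * φ' t ^ 2 - (1/2) * Real.cos (2 * φ t) with hEdef
  -- energy conservation
  have hE : ∀ t ∈ I, HasDerivWithinAt E (0 : ℝ) I t := by
    intro t ht
    have h1 : HasDerivAt (fun s => (1/2) * φ' s ^ 2)
        ((1/2) * (2 * φ' t ^ 1 * (-Real.sin (2 * φ t)))) t :=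
      ((hd2 t ht).pow 2).const_mul (1/2)
    have h2 : HasDerivAt (fun s => (1/2) * Real.cos (2 * φ s))
        ((1/2) * (-Real.sin (2 * φ t) * (2 * φ' t))) t :=
      (((hd1 t ht).const_mul 2).cos).const_mul (1/2)
    have h3 := (h1.sub h2).hasDerivWithinAt (s := I)
    have h0 : (1 / 2 * (2 * φ' t ^ 1 * -Real.sin (2 * φ t)) - 1 / 2 * (-Real.sin (2 * φ t) * (2 * φ' t))) = 0 := by ring
    rw [h0] at h3
    exact h3
  have hcons : ∀ t ∈ I, E t = e := by
    intro t ht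
    have hb := Convex.norm_image_sub_le_of_norm_hasDerivWithin_le
      (f := E) (f' := fun _ => (0:ℝ)) (C := 0) (fun x hx => hE x hx)
      (fun x _ => by simp) hconv ht₀ ht
    have hb' : |E t - E t₀| ≤ 0 := by simpa using hb
    have h0 : E t₀ = e := he.symm
    have := abs_nonneg (E t - E t₀)
    have : E t = E t₀ := by
      have : |E t - E t₀| = 0 := le_antisymm hb' (abs_nonneg _)
      have := abs_eq_zero.mp this
      linarith
    rw [this, h0]
  have hcos : ∀ t ∈ I, -(2*e) ≤ Real.cos (2 * φ t) := by
    intro t ht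
    have h := hcons t ht
    simp only [hEdef] at h
    nlinarith [sq_nonneg (φ' t)]
  have hm1 : (-1 : ℝ) < -(2*e) := by linarith
  have hle1 : -(2*e) ≤ 1 := by
    nlinarith [Real.cos_le_one (2 * φ t₀), sq_nonneg (φ' t₀)]
  -- second conclusion
  have harc_pi : Real.arccos (-(2*e)) < Real.pi := by
    refine lt_of_le_of_ne (Real.arccos_le_pi _) ?_
    rw [Ne, Real.arccos_eq_pi]
    push_neg
    linarith
  -- φ stays in (-π/2, π/2)
  have hsmall : ∀ t ∈ I, |φ t| < Real.pi / 2 := by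
    by_contra h
    push_neg at h
    obtain ⟨t, ht, habs⟩ := h
    have hsub : Set.uIcc t₀ t ⊆ I := hI.uIcc_subset ht₀ ht
    have hcont : ContinuousOn φ (Set.uIcc t₀ t) := fun s hs =>
      (hd1 s (hsub hs)).continuousAt.continuousWithinAt
    have hφ0' := abs_lt.mp hφ0
    have key : ∀ s ∈ I, φ s ≠ Real.pi / 2 ∧ φ s ≠ -(Real.pi / 2) := by
      intro s hs
      have hc := hcos s hs
      constructor <;> intro hval <;> rw [hval] at hc
      · rw [show 2 * (Real.pi / 2) = Real.pi by ring, Real.cos_pi] at hc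
        linarith
      · rw [show 2 * -(Real.pi / 2) = -Real.pi by ring, Real.cos_neg, Real.cos_pi] at hc
        linarith
    rcases le_abs.mp habs with hge | hge
    · have hmem : Real.pi / 2 ∈ Set.uIcc (φ t₀) (φ t) :=
        Set.mem_uIcc.mpr (Or.inl ⟨le_of_lt hφ0'.2, hge⟩)
      obtain ⟨s, hs, hval⟩ := intermediate_value_uIcc hcont hmem
      exact (key s (hsub hs)).1 hval
    · have hmem : -(Real.pi / 2) ∈ Set.uIcc (φ t₀) (φ t) :=
        Set.mem_uIcc.mpr (Or.inr ⟨by linarith, le_of_lt hφ0'.1⟩)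
      obtain ⟨s, hs, hval⟩ := intermediate_value_uIcc hcont hmem
      exact (key s (hsub hs)).2 hval
  refine ⟨?_, by linarith [Real.pi_pos]⟩
  intro t ht
  have hb := hcos t ht
  have hlt := hsmall t ht
  have h2φ : |2 * φ t| ≤ Real.arccos (-(2*e)) := by
    by_contra h
    push_neg at h
    have habs2 : |2 * φ t| ≤ Real.pi := by
      rw [abs_mul, abs_two]
      linarith [abs_nonneg (φ t)]
    have h1 : Real.cos |2 * φ t| < Real.cos (Real.arccos (-(2*e))) :=
      Real.strictAntiOn_cos ⟨Real.arccos_nonneg _, Real.arccos_le_pi _⟩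
        ⟨abs_nonneg _, habs2⟩ h
    rw [Real.cos_arccos hm1.le hle1, Real.cos_abs] at h1
    linarith
  rw [abs_mul, abs_two] at h2φ
  linarith
end

section
/- Let α ∈ (0, π), η ∈ (0, 1), m_b > 0, m_s ≥ 0, w > 0 and d ∈ ℝ. Define k11 = sin(α)·[2·d·m_b·(2η·cos(2α) + η + 1) + w·(m_b + m_s)·(cos(α) − η·cos(3α))] and K(α, η) = (η·cos(3α) − cos(α))/(2η·cos(2α) + η + 1). Then 2η·cos(2α) + η + 1 > 0, and k11 > 0 if and only if d > (w·(m_b + m_s)/(2·m_b))·K(α, η). -/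
/-- Stability condition (Eq. 23 / Corollary 1): `2η·cos(2α) + η + 1 > 0`, and the SRP
torque coefficient `k11` is positive iff `d > (w(m_b+m_s)/(2m_b))·K(α,η)`. -/
theorem stmt_6 (α η m_b m_s w d : ℝ)
    (hα : α ∈ Set.Ioo 0 Real.pi) (hη : η ∈ Set.Ioo (0:ℝ) 1)
    (hmb : 0 < m_b) (hms : 0 ≤ m_s) (hw : 0 < w)
    (k11 K : ℝ)
    (hk11 : k11 = Real.sin α * (2*d*m_b*(2*η*Real.cos (2*α) + η + 1) +
      w*(m_b + m_s)*(Real.cos α - η*Real.cos (3*α))))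
    (hK : K = (η*Real.cos (3*α) - Real.cos α) / (2*η*Real.cos (2*α) + η + 1)) :
    0 < 2*η*Real.cos (2*α) + η + 1 ∧
    (0 < k11 ↔ d > (w*(m_b + m_s)/(2*m_b)) * K) := by
  obtain ⟨hα0, hαπ⟩ := hα
  obtain ⟨hη0, hη1⟩ := hη
  have hsin : 0 < Real.sin α := Real.sin_pos_of_pos_of_lt_pi hα0 hαπ
  have hcos := Real.neg_one_le_cos (2*α)
  have hA : 0 < 2*η*Real.cos (2*α) + η + 1 := by nlinarith
  refine ⟨hA, ?_⟩
  rw [hk11, hK]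
  rw [mul_pos_iff]
  constructor
  · rintro (⟨-, h⟩ | ⟨h, -⟩)
    · rw [gt_iff_lt, div_mul_div_comm, div_lt_iff₀ (by positivity)]
      nlinarith
    · linarith
  · intro h
    left
    refine ⟨hsin, ?_⟩
    rw [gt_iff_lt, div_mul_div_comm, div_lt_iff₀ (by positivity)] at h
    nlinarith
end

section
/- Let η ∈ (0, 1) and define K(α, η) = (η·cos(3α) − cos(α))/(2η·cos(2α) + η + 1). Then K(α, η) < 0 for every α ∈ (0, π/2), and K(π/2, η) = 0. Consequently the minimal offset d_min = (w(m_b+m_s)/(2m_b))·K(α, η) is negative for every aperture angle α ∈ (0, π/2) (with w, m_b, m_s > 0), and equals zero in the flat-plate case α = π/2. -/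
/-!
Writing `c = cos α` and `s = sin α`, the triple- and double-angle formulas turn `K(α, η)` into
`-c (1 - η + 4η s²) / (1 - η + 4η c²)`. For `0 ≤ η < 1` both brackets are positive, so the sign
of `K` is that of `-c`: negative on `(0, π/2)` and zero at `π/2`. The prefactor of `d_min` is
positive, so `d_min` inherits the sign of `K`.
-/

open Real

lemma mul_cos_three_mul_sub_cos (η α : ℝ) :
    η * cos (3 * α) - cos α = -cos α * (1 - η + 4 * η * sin α ^ 2) := by
  rw [cos_three_mul, sin_sq]
  ring

lemma mul_cos_two_mul_add (η α : ℝ) :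
    2 * η * cos (2 * α) + η + 1 = 1 - η + 4 * η * cos α ^ 2 := by
  rw [cos_two_mul]
  ring

lemma sub_add_mul_sq_pos {η : ℝ} (hη₀ : 0 ≤ η) (hη₁ : η < 1) (x : ℝ) :
    0 < 1 - η + 4 * η * x ^ 2 := by
  have : 0 ≤ 4 * η * x ^ 2 := by positivity
  linarith

/-- Corollary 1 / Fig. 6: `K(α,η) < 0` for `α ∈ (0, π/2)` and `K(π/2,η) = 0`; hence the
minimal offset `d_min = (w(m_b+m_s)/(2m_b))·K(α,η)` is negative for `α ∈ (0, π/2)` and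
zero in the flat-plate case `α = π/2`. -/
theorem stmt_7 (η : ℝ) (hη : η ∈ Set.Ioo (0:ℝ) 1) (K : ℝ → ℝ)
    (hK : ∀ α, K α = (η*Real.cos (3*α) - Real.cos α) /
      (2*η*Real.cos (2*α) + η + 1)) :
    (∀ α ∈ Set.Ioo 0 (Real.pi/2), K α < 0) ∧
    K (Real.pi/2) = 0 ∧
    (∀ w m_b m_s : ℝ, 0 < w → 0 < m_b → 0 < m_s →
      (∀ α ∈ Set.Ioo 0 (Real.pi/2), (w*(m_b + m_s)/(2*m_b)) * K α < 0) ∧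
      (w*(m_b + m_s)/(2*m_b)) * K (Real.pi/2) = 0) := by
  obtain ⟨hη₀, hη₁⟩ := hη
  have hK' : ∀ α, K α = -cos α * (1 - η + 4 * η * sin α ^ 2) / (1 - η + 4 * η * cos α ^ 2) :=
    fun α => by rw [hK, mul_cos_three_mul_sub_cos, mul_cos_two_mul_add]
  have hneg : ∀ α ∈ Set.Ioo 0 (π / 2), K α < 0 := by
    rintro α ⟨hα₀, hα₁⟩
    have hcos : 0 < cos α := cos_pos_of_mem_Ioo ⟨by linarith [pi_pos], hα₁⟩
    rw [hK']
    exact div_neg_of_neg_of_pos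
      (mul_neg_of_neg_of_pos (neg_neg_of_pos hcos) (sub_add_mul_sq_pos hη₀.le hη₁ _))
      (sub_add_mul_sq_pos hη₀.le hη₁ _)
  have hzero : K (π / 2) = 0 := by simp [hK', cos_pi_div_two]
  refine ⟨hneg, hzero, fun w m_b m_s hw hm_b hm_s => ⟨fun α hα => ?_, by rw [hzero, mul_zero]⟩⟩
  have hcoef : 0 < w * (m_b + m_s) / (2 * m_b) := by positivity
  exact mul_neg_of_pos_of_neg hcoef (hneg α hα)
end

section
/- Let Φ̄ ≥ 0 and set c = (√2·Φ̄)^{1/2}. Then (1/(2π))·∫₀^{2π} [√2·Φ̄·cos²θ − (1/2)·cos(2·c·sin θ)] dθ = −1/2 + √2·Φ̄ + Σ_{j=2}^{∞} (−1)^{j+1}·2^{j/2 − 1}·Φ̄^{j}/(j!)², where the series converges absolutely. -/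
/-!
Expand `cos (2c sin θ)` in its Taylor series and integrate term by term (dominated convergence,
the `k`-th term being bounded by `(2c)^(2k)/(2k)!`). The Wallis integrals
`∫₀^{2π} sin^{2k} = 2π (2k)!/(2^k k!)^2` cancel the `(2k)!`, so the mean of `cos (2c sin θ)` is the
Bessel series `J₀(2c) = Σ (-c²)^k/(k!)^2`. Since `c² = √2 Φ̄` and `2^(j/2-1) Φ̄^j = (√2 Φ̄)^j / 2`,
its terms of order `k ≥ 2` are `-2` times those of the series on the right, while its first two
terms `1 - √2 Φ̄` combine with the mean `√2 Φ̄ / 2` of `√2 Φ̄ cos² θ`.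
-/

open Real

theorem integral_sin_pow_two_mul_zero_two_pi (k : ℕ) :
    ∫ θ in (0 : ℝ)..2 * π, sin θ ^ (2 * k) =
      2 * π * ((2 * k).factorial / ((2 : ℝ) ^ k * k.factorial) ^ 2) := by
  induction k with
  | zero => simp
  | succ k ih =>
    rw [show 2 * (k + 1) = 2 * k + 2 by ring, integral_sin_pow, ih]
    simp only [sin_zero, sin_two_pi, Nat.factorial_succ, pow_succ]
    push_cast
    field_simp
    ring

theorem hasSum_integral_cos_mul_sin (z a b : ℝ) :
    HasSum (fun k : ℕ => (-1) ^ k * z ^ (2 * k) / (2 * k).factorial * ∫ θ in a..b, sin θ ^ (2 * k))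
      (∫ θ in a..b, cos (z * sin θ)) := by
  have hdom := intervalIntegral.hasSum_integral_of_dominated_convergence
    (μ := MeasureTheory.volume) (a := a) (b := b)
    (F := fun (k : ℕ) θ => (-1) ^ k * (z * sin θ) ^ (2 * k) / (2 * k).factorial)
    (fun k _ => z ^ (2 * k) / (2 * k).factorial)
    (fun k => by fun_prop)
    (fun k => .of_forall fun θ _ => by
      rw [norm_div, norm_mul, norm_pow, norm_neg, norm_one, one_pow, one_mul, Real.norm_natCast,
        norm_pow, pow_mul, pow_mul, Real.norm_eq_abs, sq_abs, mul_pow]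
      gcongr
      exact mul_le_of_le_one_right (sq_nonneg z) (sin_sq_le_one θ))
    (.of_forall fun θ _ =>
      (Real.summable_pow_div_factorial z).comp_injective (mul_right_injective₀ two_ne_zero))
    intervalIntegrable_const
    (.of_forall fun θ _ => Real.hasSum_cos (z * sin θ))
  refine hdom.congr_fun fun k => ?_
  rw [← intervalIntegral.integral_const_mul]
  congr 1 with θ
  ring

theorem hasSum_average_cos_two_mul_sin (c : ℝ) :
    HasSum (fun k : ℕ => (-c ^ 2) ^ k / (k.factorial : ℝ) ^ 2)
      ((2 * π)⁻¹ * ∫ θ in (0 : ℝ)..2 * π, cos (2 * c * sin θ)) := by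
  refine ((hasSum_integral_cos_mul_sin (2 * c) 0 (2 * π)).mul_left (2 * π)⁻¹).congr_fun fun k => ?_
  rw [integral_sin_pow_two_mul_zero_two_pi]
  field_simp
  ring

theorem two_rpow_half_sub_one_mul_pow (Φ : ℝ) (n : ℕ) :
    (2 : ℝ) ^ ((n : ℝ) / 2 - 1) * Φ ^ n = (√2 * Φ) ^ n / 2 := by
  rw [Real.rpow_sub two_pos, Real.rpow_one, div_eq_mul_one_div (n : ℝ), mul_comm (n : ℝ),
    Real.rpow_mul zero_le_two, Real.rpow_natCast, ← Real.sqrt_eq_rpow, mul_pow]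
  ring

/-- Averaged pendulum Hamiltonian (Eq. 32): with `c = (√2·Φ̄)^{1/2}`, the average over
the fast angle of `√2·Φ̄·cos²θ − (1/2)·cos(2c·sin θ)` equals
`−1/2 + √2·Φ̄ + Σ_{j≥2} (−1)^{j+1} 2^{j/2−1} Φ̄^j/(j!)²` (absolutely convergent). -/
theorem stmt_10 (Φb : ℝ) (hΦ : 0 ≤ Φb)
    (c : ℝ) (hc : c = Real.sqrt (Real.sqrt 2 * Φb)) :
    Summable (fun j : ℕ => |(-1:ℝ)^(j+2+1) * (2:ℝ)^(((j:ℝ)+2)/2 - 1) * Φb^(j+2) /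
      (((j+2).factorial : ℝ))^2|) ∧
    (1 / (2*Real.pi)) * ∫ θ in (0:ℝ)..(2*Real.pi),
        (Real.sqrt 2 * Φb * Real.cos θ ^ 2 - (1/2) * Real.cos (2 * c * Real.sin θ)) =
      -1/2 + Real.sqrt 2 * Φb +
        ∑' j : ℕ, (-1:ℝ)^(j+2+1) * (2:ℝ)^(((j:ℝ)+2)/2 - 1) * Φb^(j+2) /
          (((j+2).factorial : ℝ))^2 := by
  set x := √2 * Φb
  have hJ := hasSum_average_cos_two_mul_sin c
  rw [hc, Real.sq_sqrt (by positivity), ← hc] at hJ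
  have hterm (j : ℕ) : (-1 : ℝ) ^ (j + 2 + 1) * (2 : ℝ) ^ (((j : ℝ) + 2) / 2 - 1) * Φb ^ (j + 2) /
      ((j + 2).factorial : ℝ) ^ 2 = -(1 / 2) * ((-x) ^ (j + 2) / ((j + 2).factorial : ℝ) ^ 2) := by
    have h := two_rpow_half_sub_one_mul_pow Φb (j + 2)
    push_cast at h
    rw [mul_assoc _ ((2 : ℝ) ^ _), h, neg_pow x]
    ring
  have hmean : ∫ θ in (0 : ℝ)..2 * π, cos (2 * c * sin θ) =
      2 * π * (1 - x + ∑' j : ℕ, (-x) ^ (j + 2) / ((j + 2).factorial : ℝ) ^ 2) := by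
    rw [← inv_mul_eq_iff_eq_mul₀ (by positivity), ← hJ.tsum_eq,
      ← hJ.summable.sum_add_tsum_nat_add 2]
    norm_num [Finset.sum_range_succ, sub_eq_add_neg]
  simp only [hterm, tsum_mul_left]
  refine ⟨(((summable_nat_add_iff 2).2 hJ.summable).mul_left _).abs, ?_⟩
  rw [intervalIntegral.integral_sub ((by fun_prop : Continuous _).intervalIntegrable _ _)
    ((by fun_prop : Continuous _).intervalIntegrable _ _), intervalIntegral.integral_const_mul,
    intervalIntegral.integral_const_mul, integral_cos_sq, hmean]
  simp only [sin_zero, sin_two_pi, mul_zero, sub_zero]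
  field_simp
  ring
end
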